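/- arXiv:0905.0385 — 2 statements merged into one kernel-verified Lean document; each statement's English description precedes it below -/
import Mathlib

section
/- Let 5/8 ≤ α ≤ 2/3 and 5α − 3 ≤ d ≤ 1 − α. Then the optimized symmetric Han–Kobayashi multiplexing gain satisfies r_HK(α,d) = (3 − α − 3d)/4, and this value is attained at the power split v = (3α + d − 1)/2, i.e. r((3α + d − 1)/2) = (3 − α − 3d)/4. -/
/-- The no-outage triangle `S_d = {(x,y) : x ≥ 0, y ≥ 0, x + y ≤ d}`. -/
def Sd (d : ℝ) : Set (ℝ × ℝ) := {p : ℝ × ℝ | 0 ≤ p.1 ∧ 0 ≤ p.2 ∧ p.1 + p.2 ≤ d}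

/-- Compound constraint `a₁(v) = inf_{(x,y)∈S_d} (1 - x - v - (α - v - y)⁺)⁺`. -/
noncomputable def a1 (α d v : ℝ) : ℝ :=
  sInf {z : ℝ | ∃ p ∈ Sd d, z = max (1 - p.1 - v - max (α - v - p.2) 0) 0}

/-- Compound constraint `a₂(v) = inf_{(x,y)∈S_d} (1 - x - (α - v - y)⁺)⁺`. -/
noncomputable def a2 (α d v : ℝ) : ℝ :=
  sInf {z : ℝ | ∃ p ∈ Sd d, z = max (1 - p.1 - max (α - v - p.2) 0) 0}

/-- Compound constraint `a₃(v) = inf_{(x,y)∈S_d} (max(1 - x - v, α - y) - (α - v - y)⁺)⁺`. -/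
noncomputable def a3 (α d v : ℝ) : ℝ :=
  sInf {z : ℝ | ∃ p ∈ Sd d, z = max (max (1 - p.1 - v) (α - p.2) - max (α - v - p.2) 0) 0}

/-- Compound constraint `a₄(v) = inf_{(x,y)∈S_d} (max(1 - x, α - y) - (α - v - y)⁺)⁺`. -/
noncomputable def a4 (α d v : ℝ) : ℝ :=
  sInf {z : ℝ | ∃ p ∈ Sd d, z = max (max (1 - p.1) (α - p.2) - max (α - v - p.2) 0) 0}

/-- Symmetric Han–Kobayashi multiplexing gain with power split `v`:
`r(v) = min{a₂, (a₁+a₄)/2, a₃, (a₁+a₃+a₄)/3}`. -/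
noncomputable def rHKsplit (α d v : ℝ) : ℝ :=
  min (a2 α d v)
    (min ((a1 α d v + a4 α d v) / 2)
      (min (a3 α d v) ((a1 α d v + a3 α d v + a4 α d v) / 3)))

/-- Optimized symmetric Han–Kobayashi multiplexing gain `r_HK(α,d) = sup_{v ≥ 0} r(v)`. -/
noncomputable def rHK (α d : ℝ) : ℝ := sSup {z : ℝ | ∃ v : ℝ, 0 ≤ v ∧ z = rHKsplit α d v}

/-!
For `0 ≤ v ≤ α` and `α + d ≤ 1` the worst outage point for `a₁`, `a₂`, `a₄` is `(d, 0)`, giving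
`a₁ = 1 - α - d` and `a₂ = a₄ = 1 - α - d + v`; hence `(a₁ + a₄)/2 ≤ (3 - α - 3d)/4` exactly when
`v ≤ v* = (3α + d - 1)/2`. For `v ≥ v*` the constraint `a₃` is at most `(3 - α - 3d)/4`, witnessed by
a point on the hypotenuse `x + y = d` that balances the two terms of the inner maximum (or by
`(0, d)` when that point leaves `S_d`). Conversely, splitting on the sign of `α - v - y` gives
`a₃ ≥ min(v, (1 + α - d - v)/2)`, so at `v*` all of `(a₁ + a₄)/2`, `a₃` and `(a₁ + a₃ + a₄)/3`
equal `(3 - α - 3d)/4`.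
-/

lemma mk_mem_Sd {d x y : ℝ} (hx : 0 ≤ x) (hy : 0 ≤ y) (hxy : x + y ≤ d) : (x, y) ∈ Sd d :=
  ⟨hx, hy, hxy⟩

section PosPartInf

variable {d c : ℝ} {g : ℝ × ℝ → ℝ}

lemma sInf_posPart_le {p : ℝ × ℝ} (hp : p ∈ Sd d) :
    sInf {z : ℝ | ∃ p ∈ Sd d, z = max (g p) 0} ≤ max (g p) 0 :=
  csInf_le ⟨0, by rintro z ⟨q, -, rfl⟩; exact le_max_right _ _⟩ ⟨p, hp, rfl⟩

lemma le_sInf_posPart (hd : 0 ≤ d) (h : ∀ p ∈ Sd d, c ≤ g p) :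
    c ≤ sInf {z : ℝ | ∃ p ∈ Sd d, z = max (g p) 0} :=
  le_csInf ⟨_, (0, 0), mk_mem_Sd le_rfl le_rfl (by simpa using hd), rfl⟩ <| by
    rintro z ⟨p, hp, rfl⟩
    exact (h p hp).trans (le_max_left _ _)

end PosPartInf

section Constraints

variable {α d v : ℝ}

lemma a1_eq (hd : 0 ≤ d) (hdα : d ≤ 1 - α) (hv : v ≤ α) : a1 α d v = 1 - α - d := by
  apply le_antisymm
  · calc a1 α d v ≤ max (1 - d - v - max (α - v - 0) 0) 0 :=
          sInf_posPart_le (mk_mem_Sd hd le_rfl (by simp))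
      _ = 1 - α - d := by
          rw [sub_zero, max_eq_left (sub_nonneg.2 hv), max_eq_left (by linarith)]; ring
  · refine le_sInf_posPart hd fun p ⟨_, hy, hxy⟩ => ?_
    have : max (α - v - p.2) 0 ≤ α - v := max_le (by linarith) (by linarith)
    linarith

lemma a2_eq (hd : 0 ≤ d) (hdα : d ≤ 1 - α) (hv₀ : 0 ≤ v) (hv : v ≤ α) :
    a2 α d v = 1 - α - d + v := by
  apply le_antisymm
  · calc a2 α d v ≤ max (1 - d - max (α - v - 0) 0) 0 :=
          sInf_posPart_le (mk_mem_Sd hd le_rfl (by simp))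
      _ = 1 - α - d + v := by
          rw [sub_zero, max_eq_left (sub_nonneg.2 hv), max_eq_left (by linarith)]; ring
  · refine le_sInf_posPart hd fun p ⟨_, hy, hxy⟩ => ?_
    have : max (α - v - p.2) 0 ≤ α - v := max_le (by linarith) (by linarith)
    linarith

lemma a4_eq (hd : 0 ≤ d) (hdα : d ≤ 1 - α) (hv₀ : 0 ≤ v) (hv : v ≤ α) :
    a4 α d v = 1 - α - d + v := by
  apply le_antisymm
  · calc a4 α d v ≤ max (max (1 - d) (α - 0) - max (α - v - 0) 0) 0 :=
          sInf_posPart_le (mk_mem_Sd hd le_rfl (by simp))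
      _ = 1 - α - d + v := by
          rw [sub_zero, sub_zero, max_eq_left (show α ≤ 1 - d by linarith),
            max_eq_left (sub_nonneg.2 hv), max_eq_left (by linarith)]
          ring
  · refine le_sInf_posPart hd fun p ⟨_, hy, hxy⟩ => ?_
    have : max (α - v - p.2) 0 ≤ α - v := max_le (by linarith) (by linarith)
    have := le_max_left (1 - p.1) (α - p.2)
    linarith

lemma min_le_a3 (hd : 0 ≤ d) : min v ((1 + α - d - v) / 2) ≤ a3 α d v := by
  refine le_sInf_posPart hd fun p ⟨_, _, hxy⟩ => ?_
  have h₁ := le_max_left (1 - p.1 - v) (α - p.2)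
  have h₂ := le_max_right (1 - p.1 - v) (α - p.2)
  rcases le_total (α - v - p.2) 0 with h | h
  · rw [max_eq_right h]
    linarith [min_le_right v ((1 + α - d - v) / 2)]
  · rw [max_eq_left h]
    linarith [min_le_left v ((1 + α - d - v) / 2)]

/-- On the hypotenuse at `y = (α + d + v - 1)/2` both terms of the inner maximum equal
`(1 + α - d - v)/2`. -/
lemma a3_le_of_mem_Icc (hv₁ : 1 - α - d ≤ v) (hv₂ : v ≤ 1 - α + d) :
    a3 α d v ≤ max ((1 + α - d - v) / 2) 0 := by
  set y := (α + d + v - 1) / 2 with hy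
  calc a3 α d v ≤ max (max (1 - (d - y) - v) (α - y) - max (α - v - y) 0) 0 :=
        sInf_posPart_le (mk_mem_Sd (by linarith) (by linarith) (by linarith))
    _ ≤ max ((1 + α - d - v) / 2) 0 := by
        gcongr
        have := le_max_right (α - v - y) 0
        have : max (1 - (d - y) - v) (α - y) = (1 + α - d - v) / 2 := by
          rw [show 1 - (d - y) - v = (1 + α - d - v) / 2 by ring,
            show α - y = (1 + α - d - v) / 2 by ring, max_self]
        linarith

lemma a3_le (hd : 0 ≤ d) : a3 α d v ≤ max (max (1 - v) (α - d)) 0 :=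
  calc a3 α d v ≤ max (max (1 - 0 - v) (α - d) - max (α - v - d) 0) 0 :=
        sInf_posPart_le (mk_mem_Sd le_rfl hd (by simp))
    _ ≤ max (max (1 - v) (α - d)) 0 := by
        rw [sub_zero]
        gcongr
        linarith [le_max_right (α - v - d) 0]

lemma rHKsplit_le_a3 : rHKsplit α d v ≤ a3 α d v :=
  (min_le_right _ _).trans <| (min_le_right _ _).trans (min_le_left _ _)

lemma rHKsplit_le_half_a1_add_a4 : rHKsplit α d v ≤ (a1 α d v + a4 α d v) / 2 :=
  (min_le_right _ _).trans (min_le_left _ _)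

lemma a3_le_of_split_le (hα : 5 / 8 ≤ α) (hd₁ : 5 * α - 3 ≤ d) (hd₂ : d ≤ 1 - α)
    (hv : (3 * α + d - 1) / 2 ≤ v) : a3 α d v ≤ (3 - α - 3 * d) / 4 := by
  have ht : 0 ≤ (3 - α - 3 * d) / 4 := by linarith
  rcases le_total v (1 - α + d) with hv' | hv'
  · exact (a3_le_of_mem_Icc (by linarith) hv').trans (max_le (by linarith) ht)
  · exact (a3_le (by linarith)).trans (max_le (max_le (by linarith) (by linarith)) ht)

lemma rHKsplit_le (hα : 5 / 8 ≤ α) (hd₁ : 5 * α - 3 ≤ d) (hd₂ : d ≤ 1 - α) (hv₀ : 0 ≤ v) :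
    rHKsplit α d v ≤ (3 - α - 3 * d) / 4 := by
  rcases le_total v ((3 * α + d - 1) / 2) with hv | hv
  · refine rHKsplit_le_half_a1_add_a4.trans ?_
    rw [a1_eq (by linarith) hd₂ (by linarith), a4_eq (by linarith) hd₂ hv₀ (by linarith)]
    linarith
  · exact rHKsplit_le_a3.trans (a3_le_of_split_le hα hd₁ hd₂ hv)

lemma rHKsplit_split_eq (hα : 5 / 8 ≤ α) (hd₁ : 5 * α - 3 ≤ d) (hd₂ : d ≤ 1 - α) :
    rHKsplit α d ((3 * α + d - 1) / 2) = (3 - α - 3 * d) / 4 := by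
  have hd : 0 ≤ d := by linarith
  have hv₀ : 0 ≤ (3 * α + d - 1) / 2 := by linarith
  have hvα : (3 * α + d - 1) / 2 ≤ α := by linarith
  have ha3 : a3 α d ((3 * α + d - 1) / 2) = (3 - α - 3 * d) / 4 := by
    refine le_antisymm (a3_le_of_split_le hα hd₁ hd₂ le_rfl) ?_
    calc (3 - α - 3 * d) / 4
        = min ((3 * α + d - 1) / 2) ((1 + α - d - (3 * α + d - 1) / 2) / 2) := by
          rw [min_eq_right (by linarith)]; ring
      _ ≤ _ := min_le_a3 hd
  have ha24 : 1 - α - d + (3 * α + d - 1) / 2 = (1 + α - d) / 2 := by ring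
  rw [rHKsplit, a1_eq hd hd₂ hvα, a2_eq hd hd₂ hv₀ hvα, a4_eq hd hd₂ hv₀ hvα, ha3, ha24,
    show (1 - α - d + (1 + α - d) / 2) / 2 = (3 - α - 3 * d) / 4 by ring,
    show (1 - α - d + (3 - α - 3 * d) / 4 + (1 + α - d) / 2) / 3 = (3 - α - 3 * d) / 4 by ring,
    min_self, min_self, min_eq_right (by linarith)]

end Constraints

theorem stmt_6_general (α d : ℝ) (hα₁ : 5/8 ≤ α)
    (hd₁ : 5*α - 3 ≤ d) (hd₂ : d ≤ 1 - α) :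
    rHK α d = (3 - α - 3*d) / 4 ∧ rHKsplit α d ((3*α + d - 1)/2) = (3 - α - 3*d) / 4 := by
  have hsplit := rHKsplit_split_eq hα₁ hd₁ hd₂
  have hgreatest : IsGreatest {z : ℝ | ∃ v : ℝ, 0 ≤ v ∧ z = rHKsplit α d v} ((3 - α - 3*d) / 4) :=
    ⟨⟨(3*α + d - 1)/2, by linarith, hsplit.symm⟩,
      by rintro z ⟨v, hv, rfl⟩; exact rHKsplit_le hα₁ hd₁ hd₂ hv⟩
  exact ⟨hgreatest.csSup_eq, hsplit⟩

/-- For `5/8 ≤ α ≤ 2/3` and `5α - 3 ≤ d ≤ 1 - α`,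
`r_HK(α,d) = (3 - α - 3d)/4`, attained at the power split `v = (3α + d - 1)/2`. -/
theorem stmt_6 (α d : ℝ) (hα₁ : 5/8 ≤ α) (hα₂ : α ≤ 2/3)
    (hd₁ : 5*α - 3 ≤ d) (hd₂ : d ≤ 1 - α) :
    rHK α d = (3 - α - 3*d) / 4 ∧ rHKsplit α d ((3*α + d - 1)/2) = (3 - α - 3*d) / 4 :=
  stmt_6_general α d hα₁ hd₁ hd₂
end

section
/- Let 0 ≤ d ≤ 1 and α ≥ 0. Then the intersection, over all x₁ ≥ 0, y₁ ≥ 0 with x₁ + y₁ ≤ d and all x₂ ∈ [0, d], of the regions R(x₁,y₁,x₂) = { (r₁, r₂) ∈ ℝ≥0² : r₁ ≤ (1 − x₁)^+, r₂ ≤ (1 − x₂)^+, r₁ + r₂ ≤ (max(1 − x₁, α − y₁))^+ + (1 − α − x₂ + y₁)^+ } equals the region { (r₁, r₂) ∈ ℝ≥0² : r₁ ≤ 1 − d, r₂ ≤ 1 − d, r₁ + r₂ ≤ max(1 − d, α − d, (1 − d + α)/2) + (1 − α − d)^+ }. (This is the multiplexing-gain region R(d,d) of Theorem 2 for the Rayleigh-fading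 two-user Gaussian Z-interference channel with β₁ = β₂ = 1 and α₁ = α.) -/
/-!
Each of the three constraints of `R(x₁, y₁, x₂)` is monotone in the fading state, so the
intersection is cut out by the minimum of each bound over the no-outage set. The single-user
bounds are smallest at the deepest fade `x = d`. For the sum bound, receiver 2's term is smallest
at `x₂ = d`, while at receiver 1 the fade budget `x₁ + y₁ ≤ d` is split between the direct and the
cross link: the worst split equalizes `1 - x₁` and `α - y₁` at `(1 - d + α)/2` when
`1 - d ≤ α ≤ 1 + d`, and otherwise puts the whole budget on one link.
-/

/-- The sum-rate bound of `R(x₁, y₁, x₂)`. -/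
noncomputable def sumRateBound (α x₁ y₁ x₂ : ℝ) : ℝ :=
  max (max (1 - x₁) (α - y₁)) 0 + max (1 - α - x₂ + y₁) 0

/-- The sum-rate bound of `R(d, d)`. -/
noncomputable def worstSumRate (d α : ℝ) : ℝ :=
  max (1 - d) (max (α - d) ((1 - d + α) / 2)) + max (1 - α - d) 0

theorem worstSumRate_le_sumRateBound {d α x₁ y₁ x₂ : ℝ} (hx₁ : 0 ≤ x₁) (hy₁ : 0 ≤ y₁)
    (hxy : x₁ + y₁ ≤ d) (hx₂ : x₂ ≤ d) : worstSumRate d α ≤ sumRateBound α x₁ y₁ x₂ := by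
  have hreceiver₁ : max (1 - d) (max (α - d) ((1 - d + α) / 2)) ≤ max (max (1 - x₁) (α - y₁)) 0 := by
    refine max_le (le_max_of_le_left (le_max_of_le_left (by linarith)))
      (max_le (le_max_of_le_left (le_max_of_le_right (by linarith))) ?_)
    have havg : (1 - x₁ + (α - y₁)) / 2 ≤ max (1 - x₁) (α - y₁) := by
      linarith [le_max_left (1 - x₁) (α - y₁), le_max_right (1 - x₁) (α - y₁)]
    exact le_max_of_le_left (by linarith)
  unfold worstSumRate sumRateBound
  rcases le_or_gt (1 - α - d) 0 with hweak | hstrong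
  · rw [max_eq_right hweak, add_zero]
    exact hreceiver₁.trans (le_add_of_nonneg_right (le_max_right _ _))
  · rw [max_eq_left hstrong.le, max_eq_left (by rw [max_le_iff]; constructor <;> linarith)]
    exact add_le_add (le_max_of_le_left (le_max_of_le_left (by linarith)))
      (le_max_of_le_left (by linarith))

theorem exists_sumRateBound_le_worstSumRate (α : ℝ) {d : ℝ} (hd₀ : 0 ≤ d) (hd₁ : d ≤ 1) :
    ∃ x₁ y₁, 0 ≤ x₁ ∧ 0 ≤ y₁ ∧ x₁ + y₁ ≤ d ∧ sumRateBound α x₁ y₁ d ≤ worstSumRate d α := by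
  unfold sumRateBound worstSumRate
  rcases le_total α (1 - d) with hweak | hmid
  · refine ⟨d, 0, hd₀, le_rfl, by linarith, ?_⟩
    simp only [max_def]
    split_ifs <;> linarith
  rcases le_total α (1 + d) with hmid' | hstrong
  · refine ⟨(1 - α + d) / 2, (α - 1 + d) / 2, by linarith, by linarith, by linarith, ?_⟩
    simp only [max_def]
    split_ifs <;> linarith
  · refine ⟨0, d, le_rfl, hd₀, by linarith, ?_⟩
    simp only [max_def]
    split_ifs <;> linarith

theorem stmt_16_general (d α : ℝ) (hd₁ : 0 ≤ d) (hd₂ : d ≤ 1) :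
    {p : ℝ × ℝ | 0 ≤ p.1 ∧ 0 ≤ p.2 ∧ ∀ x₁ y₁ x₂ : ℝ,
        0 ≤ x₁ → 0 ≤ y₁ → x₁ + y₁ ≤ d → 0 ≤ x₂ → x₂ ≤ d →
        (p.1 ≤ max (1 - x₁) 0 ∧ p.2 ≤ max (1 - x₂) 0 ∧
          p.1 + p.2 ≤ max (max (1 - x₁) (α - y₁)) 0 + max (1 - α - x₂ + y₁) 0)} =
      {p : ℝ × ℝ | 0 ≤ p.1 ∧ 0 ≤ p.2 ∧ p.1 ≤ 1 - d ∧ p.2 ≤ 1 - d ∧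
        p.1 + p.2 ≤ max (1 - d) (max (α - d) ((1 - d + α)/2)) + max (1 - α - d) 0} := by
  ext p
  simp only [Set.mem_ofPred_eq]
  constructor
  · rintro ⟨hp₁, hp₂, h⟩
    have hr₁ := (h d 0 0 hd₁ le_rfl (by linarith) le_rfl hd₁).1
    have hr₂ := (h 0 0 d le_rfl le_rfl (by linarith) hd₁ le_rfl).2.1
    rw [max_eq_left (sub_nonneg.2 hd₂)] at hr₁ hr₂
    obtain ⟨x₁, y₁, hx₁, hy₁, hxy, hworst⟩ := exists_sumRateBound_le_worstSumRate α hd₁ hd₂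
    exact ⟨hp₁, hp₂, hr₁, hr₂, (h x₁ y₁ d hx₁ hy₁ hxy hd₁ le_rfl).2.2.trans hworst⟩
  · rintro ⟨hp₁, hp₂, hr₁, hr₂, hsum⟩
    refine ⟨hp₁, hp₂, fun x₁ y₁ x₂ hx₁ hy₁ hxy _ hx₂ => ⟨?_, ?_, ?_⟩⟩
    · exact hr₁.trans (le_max_of_le_left (by linarith))
    · exact hr₂.trans (le_max_of_le_left (by linarith))
    · exact hsum.trans (worstSumRate_le_sumRateBound hx₁ hy₁ hxy hx₂)

/-- The fundamental multiplexing gain region `R(d,d)` of the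
Rayleigh-fading Z-interference channel (`β₁ = β₂ = 1`, cross strength `α`):
the intersection over the no-outage set of the per-state regions equals
`{(r₁,r₂) ∈ ℝ≥0² : r₁ ≤ 1-d, r₂ ≤ 1-d, r₁+r₂ ≤ max(1-d, α-d, (1-d+α)/2) + (1-α-d)⁺}`. -/
theorem stmt_16 (d α : ℝ) (hd₁ : 0 ≤ d) (hd₂ : d ≤ 1) (hα : 0 ≤ α) :
    {p : ℝ × ℝ | 0 ≤ p.1 ∧ 0 ≤ p.2 ∧ ∀ x₁ y₁ x₂ : ℝ,
        0 ≤ x₁ → 0 ≤ y₁ → x₁ + y₁ ≤ d → 0 ≤ x₂ → x₂ ≤ d →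
        (p.1 ≤ max (1 - x₁) 0 ∧ p.2 ≤ max (1 - x₂) 0 ∧
          p.1 + p.2 ≤ max (max (1 - x₁) (α - y₁)) 0 + max (1 - α - x₂ + y₁) 0)} =
      {p : ℝ × ℝ | 0 ≤ p.1 ∧ 0 ≤ p.2 ∧ p.1 ≤ 1 - d ∧ p.2 ≤ 1 - d ∧
        p.1 + p.2 ≤ max (1 - d) (max (α - d) ((1 - d + α)/2)) + max (1 - α - d) 0} :=
  stmt_16_general d α hd₁ hd₂
end
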